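/- Assume that none of α, α−β, 2β+2ζ, 2α+β+2ζ is an integer, and write 𝒰_m(n) = 𝒰_m(n; α, β, ζ, N), with the conventions 𝒰_m(−1) = 𝒰_m(N+1) = 0. Define ℬ_n = (n−N)(n+N−2α−β−2ζ)(n−α+β+1) and 𝒟_n = n(n−2α+β)(n−α−β−2ζ−1). Then for all 0 ≤ m, n ≤ N the difference equation holds: ℬ_n 𝒰_m(n+1) − (ℬ_n + 𝒟_n) 𝒰_m(n) + 𝒟_n 𝒰_m(n−1) = m(2β+2ζ+1−m) [ (n−α) 𝒰_m(n) − n(n−2α+β)/(n−α+β) · 𝒰_m(n−1) ]. -/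

import Mathlib

/-- The Pochhammer symbol `(a)_k = a(a+1)⋯(a+k−1)`. -/
noncomputable def poch (a : ℝ) (k : ℕ) : ℝ := ∏ i ∈ Finset.range k, (a + i)

/-- The Racah-type rational function
`𝒰_m(n; a, b, c, N) = Σ_{k=0}^{min(m,n)} (−m)_k (−n)_k (−a)_k (m−2b−2c−1)_k /
  [(−N)_k (a−b−n)_k (N−2a−b−2c)_k k!]`. -/
noncomputable def racahRat (a b c : ℝ) (N m n : ℕ) : ℝ :=
  ∑ k ∈ Finset.range (min m n + 1),
    poch (-(m : ℝ)) k * poch (-(n : ℝ)) k * poch (-a) k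
      * poch ((m : ℝ) - 2 * b - 2 * c - 1) k
      / (poch (-(N : ℝ)) k * poch (a - b - (n : ℝ)) k
          * poch ((N : ℝ) - 2 * a - b - 2 * c) k * (Nat.factorial k : ℝ))

lemma poch_succ (a : ℝ) (k : ℕ) : poch a (k+1) = poch a k * (a+k) :=
  Finset.prod_range_succ _ _

lemma poch_shift (a : ℝ) (k : ℕ) : poch a (k+1) = a * poch (a+1) k := by
  unfold poch
  rw [Finset.prod_range_succ']
  rw [mul_comm]
  congr 1
  · norm_num
  · exact Finset.prod_congr rfl fun i _ => by push_cast; ring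

lemma poch_ne_zero {a : ℝ} {k : ℕ} (h : ∀ i, i < k → a + i ≠ 0) : poch a k ≠ 0 :=
  Finset.prod_ne_zero_iff.mpr fun i hi => h i (Finset.mem_range.mp hi)

lemma poch_factor_ne {a : ℝ} {k : ℕ} (h : poch a k ≠ 0) {i : ℕ} (hi : i < k) :
    a + i ≠ 0 := fun h0 => h (Finset.prod_eq_zero (Finset.mem_range.mpr hi) h0)

lemma poch_nat_eq_zero {j k : ℕ} (h : j < k) : poch (-(j:ℝ)) k = 0 :=
  Finset.prod_eq_zero (Finset.mem_range.mpr h) (by simp)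

noncomputable def Tgen (α β ζ : ℝ) (N m : ℕ) (x : ℝ) (k : ℕ) : ℝ :=
  poch (-(m:ℝ)) k * poch (-x) k * poch (-α) k * poch ((m:ℝ) - 2*β - 2*ζ - 1) k /
    (poch (-(N:ℝ)) k * poch (α - β - x) k * poch ((N:ℝ) - 2*α - β - 2*ζ) k
      * (Nat.factorial k : ℝ))

noncomputable def Gcert (α β ζ : ℝ) (N m : ℕ) (x : ℝ) (k : ℕ) : ℝ :=
  -(α - β) * (poch (-(m:ℝ)) (k+1) * poch (-x) k * poch (-α) (k+1)
      * poch ((m:ℝ) - 2*β - 2*ζ - 1) (k+1)) /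
    (poch (-(N:ℝ)) k * poch (α - β - x) (k+1) * poch ((N:ℝ) - 2*α - β - 2*ζ) k
      * (Nat.factorial k : ℝ))

lemma clear1 (comp d c n : ℝ) (hd : d ≠ 0) : comp * d * (c * (n / d)) = comp * c * n := by
  field_simp

lemma clear0 (comp d n : ℝ) (hd : d ≠ 0) : comp * d * (n / d) = comp * n := by
  field_simp

lemma clearTm (cn v u Ys n1 n3 n4 w1 qss w3 kk comp : ℝ) (hu : u ≠ 0) (hv : v ≠ 0)
    (hw1 : w1 ≠ 0) (hq : qss ≠ 0) (hw3 : w3 ≠ 0) (hkk : kk ≠ 0) :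
    comp * (u * (v * (w1 * (qss / v) * w3 * kk)))
      * (cn / v * (n1 * (Ys / u) * n3 * n4 / (w1 * (qss / v) * w3 * kk)))
    = comp * cn * (n1 * Ys * n3 * n4) := by
  field_simp


set_option maxHeartbeats 1000000 in
lemma step1 (α β ζ : ℝ) (N m : ℕ) (x : ℝ) (k : ℕ)
    (hx : x ≠ 0) (hxn : -x ≠ 0)
    (hq1 : poch (-(N:ℝ)) k * (-(N:ℝ) + (k:ℝ)) ≠ 0)
    (hq1a : poch (-(N:ℝ)) k ≠ 0)
    (hq2a : poch (α - β - x) k ≠ 0)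
    (hq3 : poch ((N:ℝ) - 2*α - β - 2*ζ) k * ((N:ℝ) - 2*α - β - 2*ζ + (k:ℝ)) ≠ 0)
    (hq3a : poch ((N:ℝ) - 2*α - β - 2*ζ) k ≠ 0)
    (hab1 : α - β - x - 1 ≠ 0) (hab0 : α - β - x ≠ 0)
    (habk : α - β - x + (k:ℝ) ≠ 0) (habk1 : α - β - x + (k:ℝ) + 1 ≠ 0)
    (hfac : (Nat.factorial k : ℝ) ≠ 0)
    (hKK : ((k:ℝ) + 1) * (Nat.factorial k : ℝ) ≠ 0)
    (hA : poch (-(x+1)) (k+1) = -(x+1) * poch (-x) k)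
    (hB : poch (α - β - (x+1)) (k+1) = (α - β - x - 1) * poch (α - β - x) k)
    (hC : poch (-(x-1)) (k+1) = poch (-x) k * (-x+(k:ℝ)) * (-x+(k:ℝ)+1) / -x)
    (hD : poch (α - β - (x-1)) (k+1)
      = poch (α - β - x) k * (α-β-x+(k:ℝ)) * (α-β-x+(k:ℝ)+1) / (α-β-x)) :
   (poch (-(N:ℝ)) k * (-(N:ℝ) + (k:ℝ)))
      * (poch ((N:ℝ) - 2*α - β - 2*ζ) k * ((N:ℝ) - 2*α - β - 2*ζ + (k:ℝ)))
      * (((k:ℝ) + 1) * (Nat.factorial k : ℝ))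
      * poch (α - β - x) k * (α - β - x - 1) * (α - β - x + (k:ℝ))
      * (α - β - x + (k:ℝ) + 1) * x * (x - α + β)
      * ((x - N) * (x + N - 2*α - β - 2*ζ) * (x - α + β + 1)
          * Tgen α β ζ N m (x+1) (k+1))
      = (α - β - x + (k:ℝ)) * ((α - β - x + (k:ℝ) + 1) * (x * (x - α + β)))
        * ((x - N) * (x + N - 2*α - β - 2*ζ) * (x - α + β + 1))
        * (poch (-(m:ℝ)) k * (-(m:ℝ) + (k:ℝ)) * (-(x + 1) * poch (-x) k)
            * (poch (-α) k * (-α + (k:ℝ)))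
            * (poch ((m:ℝ) - 2*β - 2*ζ - 1) k * ((m:ℝ) - 2*β - 2*ζ - 1 + (k:ℝ))))  := by
    simp only [Tgen, hA, hB, poch_succ ((m:ℝ) - 2*β - 2*ζ - 1) k, poch_succ (-(m:ℝ)) k,
      poch_succ (-α) k, poch_succ (-(N:ℝ)) k, poch_succ ((N:ℝ) - 2*α - β - 2*ζ) k,
      Nat.factorial_succ]
    push_cast
    rw [show (poch (-(N:ℝ)) k * (-(N:ℝ) + (k:ℝ)))
      * (poch ((N:ℝ) - 2*α - β - 2*ζ) k * ((N:ℝ) - 2*α - β - 2*ζ + (k:ℝ)))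
      * (((k:ℝ) + 1) * (Nat.factorial k : ℝ))
      * poch (α - β - x) k * (α - β - x - 1) * (α - β - x + (k:ℝ))
      * (α - β - x + (k:ℝ) + 1) * x * (x - α + β)
      = ((α - β - x + (k:ℝ)) * ((α - β - x + (k:ℝ) + 1) * (x * (x - α + β))))
        * (poch (-(N:ℝ)) k * (-(N:ℝ) + (k:ℝ))
            * ((α - β - x - 1) * poch (α - β - x) k)
            * (poch ((N:ℝ) - 2*α - β - 2*ζ) k * ((N:ℝ) - 2*α - β - 2*ζ + (k:ℝ)))
            * (((k:ℝ) + 1) * (Nat.factorial k : ℝ))) by ring]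
    rw [clear1 _ _ _ _ (by
      exact mul_ne_zero (mul_ne_zero (mul_ne_zero hq1 (mul_ne_zero hab1 hq2a)) hq3) hKK)]


set_option maxHeartbeats 1000000 in
lemma step2 (α β ζ : ℝ) (N m : ℕ) (x : ℝ) (k : ℕ)
    (hx : x ≠ 0) (hxn : -x ≠ 0)
    (hq1 : poch (-(N:ℝ)) k * (-(N:ℝ) + (k:ℝ)) ≠ 0)
    (hq1a : poch (-(N:ℝ)) k ≠ 0)
    (hq2a : poch (α - β - x) k ≠ 0)
    (hq3 : poch ((N:ℝ) - 2*α - β - 2*ζ) k * ((N:ℝ) - 2*α - β - 2*ζ + (k:ℝ)) ≠ 0)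
    (hq3a : poch ((N:ℝ) - 2*α - β - 2*ζ) k ≠ 0)
    (hab1 : α - β - x - 1 ≠ 0) (hab0 : α - β - x ≠ 0)
    (habk : α - β - x + (k:ℝ) ≠ 0) (habk1 : α - β - x + (k:ℝ) + 1 ≠ 0)
    (hfac : (Nat.factorial k : ℝ) ≠ 0)
    (hKK : ((k:ℝ) + 1) * (Nat.factorial k : ℝ) ≠ 0)
    (hA : poch (-(x+1)) (k+1) = -(x+1) * poch (-x) k)
    (hB : poch (α - β - (x+1)) (k+1) = (α - β - x - 1) * poch (α - β - x) k)
    (hC : poch (-(x-1)) (k+1) = poch (-x) k * (-x+(k:ℝ)) * (-x+(k:ℝ)+1) / -x)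
    (hD : poch (α - β - (x-1)) (k+1)
      = poch (α - β - x) k * (α-β-x+(k:ℝ)) * (α-β-x+(k:ℝ)+1) / (α-β-x)) :
   (poch (-(N:ℝ)) k * (-(N:ℝ) + (k:ℝ)))
      * (poch ((N:ℝ) - 2*α - β - 2*ζ) k * ((N:ℝ) - 2*α - β - 2*ζ + (k:ℝ)))
      * (((k:ℝ) + 1) * (Nat.factorial k : ℝ))
      * poch (α - β - x) k * (α - β - x - 1) * (α - β - x + (k:ℝ))
      * (α - β - x + (k:ℝ) + 1) * x * (x - α + β)
      * (((x - N) * (x + N - 2*α - β - 2*ζ) * (x - α + β + 1)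
         + x * (x - 2*α + β) * (x - α - β - 2*ζ - 1)
         + (m:ℝ) * (2*β + 2*ζ + 1 - m) * (x - α)) * Tgen α β ζ N m x (k+1))
      = (α - β - x - 1) * ((α - β - x + (k:ℝ) + 1) * (x * (x - α + β)))
        * ((x - N) * (x + N - 2*α - β - 2*ζ) * (x - α + β + 1)
         + x * (x - 2*α + β) * (x - α - β - 2*ζ - 1)
         + (m:ℝ) * (2*β + 2*ζ + 1 - m) * (x - α))
        * (poch (-(m:ℝ)) k * (-(m:ℝ) + (k:ℝ)) * (poch (-x) k * (-x + (k:ℝ))) * (poch (-α) k * (-α + (k:ℝ))) * (poch ((m:ℝ) - 2*β - 2*ζ - 1) k * ((m:ℝ) - 2*β - 2*ζ - 1 + (k:ℝ))))  := by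
    simp only [Tgen, hA, hB, hC, hD, poch_succ ((m:ℝ) - 2*β - 2*ζ - 1) k, poch_succ (-(m:ℝ)) k,
      poch_succ (-α) k, poch_succ (-x) k, poch_succ (α - β - x) k, poch_succ (-(N:ℝ)) k,
      poch_succ ((N:ℝ) - 2*α - β - 2*ζ) k, Nat.factorial_succ]
    push_cast
    rw [show (poch (-(N:ℝ)) k * (-(N:ℝ) + (k:ℝ)))
      * (poch ((N:ℝ) - 2*α - β - 2*ζ) k * ((N:ℝ) - 2*α - β - 2*ζ + (k:ℝ)))
      * (((k:ℝ) + 1) * (Nat.factorial k : ℝ))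
      * poch (α - β - x) k * (α - β - x - 1) * (α - β - x + (k:ℝ))
      * (α - β - x + (k:ℝ) + 1) * x * (x - α + β)
      = ((α - β - x - 1) * ((α - β - x + (k:ℝ) + 1) * (x * (x - α + β))))
        * (poch (-(N:ℝ)) k * (-(N:ℝ) + (k:ℝ))
            * (poch (α - β - x) k * (α - β - x + (k:ℝ)))
            * (poch ((N:ℝ) - 2*α - β - 2*ζ) k * ((N:ℝ) - 2*α - β - 2*ζ + (k:ℝ)))
            * (((k:ℝ) + 1) * (Nat.factorial k : ℝ))) by ring]
    rw [clear1 _ _ _ _ (by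
      exact mul_ne_zero (mul_ne_zero (mul_ne_zero hq1 (mul_ne_zero hq2a habk)) hq3) hKK)]


set_option maxHeartbeats 1000000 in
lemma step3 (α β ζ : ℝ) (N m : ℕ) (x : ℝ) (k : ℕ)
    (hx : x ≠ 0) (hxn : -x ≠ 0)
    (hq1 : poch (-(N:ℝ)) k * (-(N:ℝ) + (k:ℝ)) ≠ 0)
    (hq1a : poch (-(N:ℝ)) k ≠ 0)
    (hq2a : poch (α - β - x) k ≠ 0)
    (hq3 : poch ((N:ℝ) - 2*α - β - 2*ζ) k * ((N:ℝ) - 2*α - β - 2*ζ + (k:ℝ)) ≠ 0)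
    (hq3a : poch ((N:ℝ) - 2*α - β - 2*ζ) k ≠ 0)
    (hab1 : α - β - x - 1 ≠ 0) (hab0 : α - β - x ≠ 0)
    (habk : α - β - x + (k:ℝ) ≠ 0) (habk1 : α - β - x + (k:ℝ) + 1 ≠ 0)
    (hfac : (Nat.factorial k : ℝ) ≠ 0)
    (hKK : ((k:ℝ) + 1) * (Nat.factorial k : ℝ) ≠ 0)
    (hA : poch (-(x+1)) (k+1) = -(x+1) * poch (-x) k)
    (hB : poch (α - β - (x+1)) (k+1) = (α - β - x - 1) * poch (α - β - x) k)
    (hC : poch (-(x-1)) (k+1) = poch (-x) k * (-x+(k:ℝ)) * (-x+(k:ℝ)+1) / -x)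
    (hD : poch (α - β - (x-1)) (k+1)
      = poch (α - β - x) k * (α-β-x+(k:ℝ)) * (α-β-x+(k:ℝ)+1) / (α-β-x)) :
   (poch (-(N:ℝ)) k * (-(N:ℝ) + (k:ℝ)))
      * (poch ((N:ℝ) - 2*α - β - 2*ζ) k * ((N:ℝ) - 2*α - β - 2*ζ + (k:ℝ)))
      * (((k:ℝ) + 1) * (Nat.factorial k : ℝ))
      * poch (α - β - x) k * (α - β - x - 1) * (α - β - x + (k:ℝ))
      * (α - β - x + (k:ℝ) + 1) * x * (x - α + β)
      * ((-( x * (x - 2*α + β) * (x - α - β - 2*ζ - 1) * (x - α + β)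
          + (m:ℝ) * (2*β + 2*ζ + 1 - m) * x * (x - 2*α + β))) / (α - β - x) * Tgen α β ζ N m (x-1) (k+1))
      = -((α - β - x - 1) * (x - α + β)) * (-( x * (x - 2*α + β) * (x - α - β - 2*ζ - 1) * (x - α + β)
          + (m:ℝ) * (2*β + 2*ζ + 1 - m) * x * (x - 2*α + β)))
        * (poch (-(m:ℝ)) k * (-(m:ℝ) + (k:ℝ)) * (poch (-x) k * (-x + (k:ℝ)) * (-x + (k:ℝ) + 1)) * (poch (-α) k * (-α + (k:ℝ))) * (poch ((m:ℝ) - 2*β - 2*ζ - 1) k * ((m:ℝ) - 2*β - 2*ζ - 1 + (k:ℝ))))  := by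
    simp only [Tgen, hA, hB, hC, hD, poch_succ ((m:ℝ) - 2*β - 2*ζ - 1) k, poch_succ (-(m:ℝ)) k,
      poch_succ (-α) k, poch_succ (-x) k, poch_succ (α - β - x) k, poch_succ (-(N:ℝ)) k,
      poch_succ ((N:ℝ) - 2*α - β - 2*ζ) k, Nat.factorial_succ]
    push_cast
    rw [show (poch (-(N:ℝ)) k * (-(N:ℝ) + (k:ℝ)))
      * (poch ((N:ℝ) - 2*α - β - 2*ζ) k * ((N:ℝ) - 2*α - β - 2*ζ + (k:ℝ)))
      * (((k:ℝ) + 1) * (Nat.factorial k : ℝ))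
      * poch (α - β - x) k * (α - β - x - 1) * (α - β - x + (k:ℝ))
      * (α - β - x + (k:ℝ) + 1) * x * (x - α + β)
      = -((α - β - x - 1) * (x - α + β)) * (-x * ((α - β - x) * (poch (-(N:ℝ)) k * (-(N:ℝ) + (k:ℝ))
            * (poch (α - β - x) k * (α - β - x + (k:ℝ)) * (α - β - x + (k:ℝ) + 1) / (α - β - x))
            * (poch ((N:ℝ) - 2*α - β - 2*ζ) k * ((N:ℝ) - 2*α - β - 2*ζ + (k:ℝ)))
            * (((k:ℝ) + 1) * (Nat.factorial k : ℝ))))) by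
        field_simp]
    rw [clearTm _ _ _ _ _ _ _ _ _ _ _ _ hxn hab0 hq1
      (mul_ne_zero (mul_ne_zero hq2a habk) habk1) hq3 hKK]


set_option maxHeartbeats 1000000 in
lemma step4 (α β ζ : ℝ) (N m : ℕ) (x : ℝ) (k : ℕ)
    (hx : x ≠ 0) (hxn : -x ≠ 0)
    (hq1 : poch (-(N:ℝ)) k * (-(N:ℝ) + (k:ℝ)) ≠ 0)
    (hq1a : poch (-(N:ℝ)) k ≠ 0)
    (hq2a : poch (α - β - x) k ≠ 0)
    (hq3 : poch ((N:ℝ) - 2*α - β - 2*ζ) k * ((N:ℝ) - 2*α - β - 2*ζ + (k:ℝ)) ≠ 0)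
    (hq3a : poch ((N:ℝ) - 2*α - β - 2*ζ) k ≠ 0)
    (hab1 : α - β - x - 1 ≠ 0) (hab0 : α - β - x ≠ 0)
    (habk : α - β - x + (k:ℝ) ≠ 0) (habk1 : α - β - x + (k:ℝ) + 1 ≠ 0)
    (hfac : (Nat.factorial k : ℝ) ≠ 0)
    (hKK : ((k:ℝ) + 1) * (Nat.factorial k : ℝ) ≠ 0)
    (hA : poch (-(x+1)) (k+1) = -(x+1) * poch (-x) k)
    (hB : poch (α - β - (x+1)) (k+1) = (α - β - x - 1) * poch (α - β - x) k)
    (hC : poch (-(x-1)) (k+1) = poch (-x) k * (-x+(k:ℝ)) * (-x+(k:ℝ)+1) / -x)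
    (hD : poch (α - β - (x-1)) (k+1)
      = poch (α - β - x) k * (α-β-x+(k:ℝ)) * (α-β-x+(k:ℝ)+1) / (α-β-x)) :
   (poch (-(N:ℝ)) k * (-(N:ℝ) + (k:ℝ)))
      * (poch ((N:ℝ) - 2*α - β - 2*ζ) k * ((N:ℝ) - 2*α - β - 2*ζ + (k:ℝ)))
      * (((k:ℝ) + 1) * (Nat.factorial k : ℝ))
      * poch (α - β - x) k * (α - β - x - 1) * (α - β - x + (k:ℝ))
      * (α - β - x + (k:ℝ) + 1) * x * (x - α + β)
      * Gcert α β ζ N m x (k+1)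
      = (α - β - x - 1) * (x * (x - α + β))
        * (-(α - β) * (poch (-(m:ℝ)) k * (-(m:ℝ) + (k:ℝ)) * (-(m:ℝ) + ((k:ℝ) + 1)) * (poch (-x) k * (-x + (k:ℝ)))
            * (poch (-α) k * (-α + (k:ℝ)) * (-α + ((k:ℝ) + 1)))
            * (poch ((m:ℝ) - 2*β - 2*ζ - 1) k * ((m:ℝ) - 2*β - 2*ζ - 1 + (k:ℝ)) * ((m:ℝ) - 2*β - 2*ζ - 1 + ((k:ℝ) + 1)))))  := by
    simp only [Gcert, poch_succ ((m:ℝ) - 2*β - 2*ζ - 1), poch_succ (-(m:ℝ)),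
      poch_succ (-α), poch_succ (-x) k, poch_succ (-(N:ℝ)) k,
      poch_succ (α - β - x), poch_succ ((N:ℝ) - 2*α - β - 2*ζ) k, Nat.factorial_succ]
    push_cast
    rw [show (poch (-(N:ℝ)) k * (-(N:ℝ) + (k:ℝ)))
      * (poch ((N:ℝ) - 2*α - β - 2*ζ) k * ((N:ℝ) - 2*α - β - 2*ζ + (k:ℝ)))
      * (((k:ℝ) + 1) * (Nat.factorial k : ℝ))
      * poch (α - β - x) k * (α - β - x - 1) * (α - β - x + (k:ℝ))
      * (α - β - x + (k:ℝ) + 1) * x * (x - α + β)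
      = ((α - β - x - 1) * (x * (x - α + β))) * (poch (-(N:ℝ)) k * (-(N:ℝ) + (k:ℝ))
            * (poch (α - β - x) k * (α - β - x + (k:ℝ)) * (α - β - x + ((k:ℝ) + 1)))
            * (poch ((N:ℝ) - 2*α - β - 2*ζ) k * ((N:ℝ) - 2*α - β - 2*ζ + (k:ℝ)))
            * (((k:ℝ) + 1) * (Nat.factorial k : ℝ))) by ring]
    rw [clear0 _ _ _ (by
      exact mul_ne_zero (mul_ne_zero (mul_ne_zero hq1
        (mul_ne_zero (mul_ne_zero hq2a habk)
          (show α - β - x + ((k:ℝ) + 1) ≠ 0 by intro h; exact habk1 (by linarith)))) hq3) hKK)]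


set_option maxHeartbeats 1000000 in
lemma step5 (α β ζ : ℝ) (N m : ℕ) (x : ℝ) (k : ℕ)
    (hx : x ≠ 0) (hxn : -x ≠ 0)
    (hq1 : poch (-(N:ℝ)) k * (-(N:ℝ) + (k:ℝ)) ≠ 0)
    (hq1a : poch (-(N:ℝ)) k ≠ 0)
    (hq2a : poch (α - β - x) k ≠ 0)
    (hq3 : poch ((N:ℝ) - 2*α - β - 2*ζ) k * ((N:ℝ) - 2*α - β - 2*ζ + (k:ℝ)) ≠ 0)
    (hq3a : poch ((N:ℝ) - 2*α - β - 2*ζ) k ≠ 0)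
    (hab1 : α - β - x - 1 ≠ 0) (hab0 : α - β - x ≠ 0)
    (habk : α - β - x + (k:ℝ) ≠ 0) (habk1 : α - β - x + (k:ℝ) + 1 ≠ 0)
    (hfac : (Nat.factorial k : ℝ) ≠ 0)
    (hKK : ((k:ℝ) + 1) * (Nat.factorial k : ℝ) ≠ 0)
    (hA : poch (-(x+1)) (k+1) = -(x+1) * poch (-x) k)
    (hB : poch (α - β - (x+1)) (k+1) = (α - β - x - 1) * poch (α - β - x) k)
    (hC : poch (-(x-1)) (k+1) = poch (-x) k * (-x+(k:ℝ)) * (-x+(k:ℝ)+1) / -x)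
    (hD : poch (α - β - (x-1)) (k+1)
      = poch (α - β - x) k * (α-β-x+(k:ℝ)) * (α-β-x+(k:ℝ)+1) / (α-β-x)) :
   (poch (-(N:ℝ)) k * (-(N:ℝ) + (k:ℝ)))
      * (poch ((N:ℝ) - 2*α - β - 2*ζ) k * ((N:ℝ) - 2*α - β - 2*ζ + (k:ℝ)))
      * (((k:ℝ) + 1) * (Nat.factorial k : ℝ))
      * poch (α - β - x) k * (α - β - x - 1) * (α - β - x + (k:ℝ))
      * (α - β - x + (k:ℝ) + 1) * x * (x - α + β)
      * Gcert α β ζ N m x k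
      = (-(N:ℝ) + (k:ℝ)) * (((N:ℝ) - 2*α - β - 2*ζ + (k:ℝ)) * (((k:ℝ) + 1)
          * ((α - β - x - 1) * ((α - β - x + (k:ℝ) + 1) * (x * (x - α + β))))))
        * (-(α - β) * (poch (-(m:ℝ)) k * (-(m:ℝ) + (k:ℝ)) * poch (-x) k * (poch (-α) k * (-α + (k:ℝ))) * (poch ((m:ℝ) - 2*β - 2*ζ - 1) k * ((m:ℝ) - 2*β - 2*ζ - 1 + (k:ℝ)))))  := by
    simp only [Gcert, poch_succ ((m:ℝ) - 2*β - 2*ζ - 1) k, poch_succ (-(m:ℝ)) k,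
      poch_succ (-α) k, poch_succ (α - β - x) k]
    push_cast
    rw [show (poch (-(N:ℝ)) k * (-(N:ℝ) + (k:ℝ)))
      * (poch ((N:ℝ) - 2*α - β - 2*ζ) k * ((N:ℝ) - 2*α - β - 2*ζ + (k:ℝ)))
      * (((k:ℝ) + 1) * (Nat.factorial k : ℝ))
      * poch (α - β - x) k * (α - β - x - 1) * (α - β - x + (k:ℝ))
      * (α - β - x + (k:ℝ) + 1) * x * (x - α + β)
      = ((-(N:ℝ) + (k:ℝ)) * (((N:ℝ) - 2*α - β - 2*ζ + (k:ℝ)) * (((k:ℝ) + 1)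
          * ((α - β - x - 1) * ((α - β - x + (k:ℝ) + 1) * (x * (x - α + β)))))))
        * (poch (-(N:ℝ)) k * (poch (α - β - x) k * (α - β - x + (k:ℝ)))
            * poch ((N:ℝ) - 2*α - β - 2*ζ) k * (Nat.factorial k : ℝ)) by ring]
    rw [clear0 _ _ _ (by
      exact mul_ne_zero (mul_ne_zero (mul_ne_zero hq1a (mul_ne_zero hq2a habk)) hq3a) hfac)]


set_option maxHeartbeats 1000000 in
set_option maxHeartbeats 1000000 in
lemma key (α β ζ : ℝ) (N m : ℕ) (x : ℝ) (k : ℕ)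
    (hx : x ≠ 0)
    (hq1 : poch (-(N:ℝ)) (k+1) ≠ 0)
    (hq2 : poch (α - β - x - 1) (k+3) ≠ 0)
    (hq3 : poch ((N:ℝ) - 2*α - β - 2*ζ) (k+1) ≠ 0)
    (hxab : x - α + β ≠ 0) :
    (x - N) * (x + N - 2*α - β - 2*ζ) * (x - α + β + 1) * Tgen α β ζ N m (x+1) (k+1)
      - ((x - N) * (x + N - 2*α - β - 2*ζ) * (x - α + β + 1)
         + x * (x - 2*α + β) * (x - α - β - 2*ζ - 1)
         + (m:ℝ) * (2*β + 2*ζ + 1 - m) * (x - α)) * Tgen α β ζ N m x (k+1)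
      + (x * (x - 2*α + β) * (x - α - β - 2*ζ - 1)
         + (m:ℝ) * (2*β + 2*ζ + 1 - m) * x * (x - 2*α + β) / (x - α + β))
          * Tgen α β ζ N m (x-1) (k+1)
    = Gcert α β ζ N m x (k+1) - Gcert α β ζ N m x k := by
  -- scalar nonzero facts
  have hab1 : α - β - x - 1 ≠ 0 := by
    have := poch_factor_ne hq2 (show 0 < k+3 by omega); simpa using this
  have hab0 : α - β - x ≠ 0 := by
    have h := poch_factor_ne hq2 (show 1 < k+3 by omega)
    rw [show α - β - x - 1 + ((1:ℕ):ℝ) = α - β - x by push_cast; ring] at h; exact h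
  have habk : α - β - x + (k:ℝ) ≠ 0 := by
    have h := poch_factor_ne hq2 (show k+1 < k+3 by omega)
    rw [show α - β - x - 1 + ((k+1:ℕ):ℝ) = α - β - x + k by push_cast; ring] at h; exact h
  have habk1 : α - β - x + (k:ℝ) + 1 ≠ 0 := by
    have h := poch_factor_ne hq2 (show k+2 < k+3 by omega)
    rw [show α - β - x - 1 + ((k+2:ℕ):ℝ) = α - β - x + k + 1 by push_cast; ring] at h
    exact h
  have hq2a : poch (α - β - x) k ≠ 0 := by
    apply poch_ne_zero; intro i hi
    have h := poch_factor_ne hq2 (show i+1 < k+3 by omega)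
    rw [show α - β - x - 1 + ((i+1:ℕ):ℝ) = α - β - x + i by push_cast; ring] at h; exact h
  have hfac : (Nat.factorial k : ℝ) ≠ 0 := Nat.cast_ne_zero.mpr k.factorial_ne_zero
  have hk1 : ((k:ℝ) + 1) ≠ 0 := by positivity
  rw [poch_succ] at hq1 hq3
  have hq1a : poch (-(N:ℝ)) k ≠ 0 := (mul_ne_zero_iff.mp hq1).1
  have hq1b : -(N:ℝ) + (k:ℝ) ≠ 0 := (mul_ne_zero_iff.mp hq1).2
  have hq3a : poch ((N:ℝ) - 2*α - β - 2*ζ) k ≠ 0 := (mul_ne_zero_iff.mp hq3).1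
  have hq3b : (N:ℝ) - 2*α - β - 2*ζ + (k:ℝ) ≠ 0 := (mul_ne_zero_iff.mp hq3).2
  have hKK : ((k:ℝ) + 1) * (Nat.factorial k : ℝ) ≠ 0 := mul_ne_zero hk1 hfac
  have hxn : -x ≠ 0 := neg_ne_zero.mpr hx
  -- shifted-argument rewrites
  have hA : poch (-(x+1)) (k+1) = -(x+1) * poch (-x) k := by
    rw [poch_shift]; norm_num
  have hB : poch (α - β - (x+1)) (k+1) = (α - β - x - 1) * poch (α - β - x) k := by
    rw [show α - β - (x+1) = (α - β - x - 1) by ring, poch_shift,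
      show α - β - x - 1 + 1 = α - β - x by ring]
  have hC : poch (-(x-1)) (k+1)
      = poch (-x) k * (-x+(k:ℝ)) * (-x+(k:ℝ)+1) / -x := by
    have h3 : (-x) * poch ((-x)+1) (k+1) = poch (-x) k * (-x+(k:ℝ)) * (-x+(k:ℝ)+1) := by
      rw [← poch_shift, poch_succ, poch_succ]; push_cast; ring
    rw [show -(x-1) = (-x)+1 by ring, eq_div_iff hxn]
    linear_combination h3
  have hD : poch (α - β - (x-1)) (k+1)
      = poch (α - β - x) k * (α-β-x+(k:ℝ)) * (α-β-x+(k:ℝ)+1) / (α-β-x) := by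
    have h3 : (α-β-x) * poch ((α-β-x)+1) (k+1)
        = poch (α-β-x) k * (α-β-x+(k:ℝ)) * (α-β-x+(k:ℝ)+1) := by
      rw [← poch_shift, poch_succ, poch_succ]; push_cast; ring
    rw [show α - β - (x-1) = (α-β-x)+1 by ring, eq_div_iff hab0]
    linear_combination h3
  -- the master denominator
  have hΔ : (poch (-(N:ℝ)) k * (-(N:ℝ) + (k:ℝ)))
      * (poch ((N:ℝ) - 2*α - β - 2*ζ) k * ((N:ℝ) - 2*α - β - 2*ζ + (k:ℝ)))
      * (((k:ℝ) + 1) * (Nat.factorial k : ℝ))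
      * poch (α - β - x) k * (α - β - x - 1) * (α - β - x + (k:ℝ))
      * (α - β - x + (k:ℝ) + 1) * x * (x - α + β) ≠ 0 := by
    exact mul_ne_zero (mul_ne_zero (mul_ne_zero (mul_ne_zero (mul_ne_zero (mul_ne_zero
      (mul_ne_zero (mul_ne_zero hq1 hq3) hKK) hq2a) hab1) habk) habk1) hx) hxab
  apply mul_left_cancel₀ hΔ
  rw [show x * (x - 2*α + β) * (x - α - β - 2*ζ - 1)
         + (m:ℝ) * (2*β + 2*ζ + 1 - m) * x * (x - 2*α + β) / (x - α + β)
      = (-( x * (x - 2*α + β) * (x - α - β - 2*ζ - 1) * (x - α + β)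
          + (m:ℝ) * (2*β + 2*ζ + 1 - m) * x * (x - 2*α + β))) / (α - β - x) by
        field_simp; ring]
  rw [mul_add ((poch (-(N:ℝ)) k * (-(N:ℝ) + (k:ℝ)))
      * (poch ((N:ℝ) - 2*α - β - 2*ζ) k * ((N:ℝ) - 2*α - β - 2*ζ + (k:ℝ)))
      * (((k:ℝ) + 1) * (Nat.factorial k : ℝ))
      * poch (α - β - x) k * (α - β - x - 1) * (α - β - x + (k:ℝ))
      * (α - β - x + (k:ℝ) + 1) * x * (x - α + β)), mul_sub ((poch (-(N:ℝ)) k * (-(N:ℝ) + (k:ℝ)))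
      * (poch ((N:ℝ) - 2*α - β - 2*ζ) k * ((N:ℝ) - 2*α - β - 2*ζ + (k:ℝ)))
      * (((k:ℝ) + 1) * (Nat.factorial k : ℝ))
      * poch (α - β - x) k * (α - β - x - 1) * (α - β - x + (k:ℝ))
      * (α - β - x + (k:ℝ) + 1) * x * (x - α + β)), mul_sub ((poch (-(N:ℝ)) k * (-(N:ℝ) + (k:ℝ)))
      * (poch ((N:ℝ) - 2*α - β - 2*ζ) k * ((N:ℝ) - 2*α - β - 2*ζ + (k:ℝ)))
      * (((k:ℝ) + 1) * (Nat.factorial k : ℝ))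
      * poch (α - β - x) k * (α - β - x - 1) * (α - β - x + (k:ℝ))
      * (α - β - x + (k:ℝ) + 1) * x * (x - α + β))]
  -- per-term clearing
  have t1 := step1 α β ζ N m x k hx hxn hq1 hq1a hq2a hq3 hq3a hab1 hab0 habk habk1 hfac hKK hA hB hC hD
  have t2 := step2 α β ζ N m x k hx hxn hq1 hq1a hq2a hq3 hq3a hab1 hab0 habk habk1 hfac hKK hA hB hC hD
  have t3 := step3 α β ζ N m x k hx hxn hq1 hq1a hq2a hq3 hq3a hab1 hab0 habk habk1 hfac hKK hA hB hC hD
  have t4 := step4 α β ζ N m x k hx hxn hq1 hq1a hq2a hq3 hq3a hab1 hab0 habk habk1 hfac hKK hA hB hC hD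
  have t5 := step5 α β ζ N m x k hx hxn hq1 hq1a hq2a hq3 hq3a hab1 hab0 habk habk1 hfac hKK hA hB hC hD
  rw [t1, t2, t3, t4, t5]
  generalize poch (-(m:ℝ)) k * (-(m:ℝ) + (k:ℝ)) = z1
  generalize (poch (-α) k * (-α + (k:ℝ))) = z3
  generalize (poch ((m:ℝ) - 2*β - 2*ζ - 1) k * ((m:ℝ) - 2*β - 2*ζ - 1 + (k:ℝ))) = z4
  generalize poch (-x) k = yv
  ring

lemma Tgen_zero (α β ζ : ℝ) (N m : ℕ) (y : ℝ) : Tgen α β ζ N m y 0 = 1 := by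
  simp [Tgen, poch]

lemma poch_one (a : ℝ) : poch a 1 = a := by
  simp [poch]

lemma key0 (α β ζ : ℝ) (N m : ℕ) (x : ℝ) (hab0 : α - β - x ≠ 0) (hxab : x - α + β ≠ 0) :
    (x - N) * (x + N - 2*α - β - 2*ζ) * (x - α + β + 1) * Tgen α β ζ N m (x+1) 0
      - ((x - N) * (x + N - 2*α - β - 2*ζ) * (x - α + β + 1)
         + x * (x - 2*α + β) * (x - α - β - 2*ζ - 1)
         + (m:ℝ) * (2*β + 2*ζ + 1 - m) * (x - α)) * Tgen α β ζ N m x 0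
      + (x * (x - 2*α + β) * (x - α - β - 2*ζ - 1)
         + (m:ℝ) * (2*β + 2*ζ + 1 - m) * x * (x - 2*α + β) / (x - α + β))
          * Tgen α β ζ N m (x-1) 0
    = Gcert α β ζ N m x 0 := by
  simp only [Tgen_zero, mul_one, Gcert, zero_add, poch_one]
  simp only [poch, Finset.prod_range_zero, Nat.factorial_zero, Nat.cast_one, one_mul, mul_one]
  field_simp
  ring

lemma racah_ext (α β ζ : ℝ) (N m n : ℕ) :
    racahRat α β ζ N m n = ∑ k ∈ Finset.range (m+1), Tgen α β ζ N m (n:ℝ) k := by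
  have h : racahRat α β ζ N m n
      = ∑ k ∈ Finset.range (min m n + 1), Tgen α β ζ N m (n:ℝ) k := rfl
  rw [h]
  apply Finset.sum_subset
  · intro k hk; simp only [Finset.mem_range] at *; omega
  · intro k hk hk2
    simp only [Finset.mem_range] at hk hk2
    rw [Tgen, poch_nat_eq_zero (show n < k by omega)]
    simp


/-- The difference equation in the variable `n` for the Racah-type rational
functions `𝒰_m(n)`, with the conventions `𝒰_m(−1) = 𝒰_m(N+1) = 0`. -/
theorem racahRat_difference_equation (N : ℕ) (hN : 1 ≤ N) (α β ζ : ℝ)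
    (i0 : ∀ z : ℤ, α ≠ (z : ℝ))
    (i1 : ∀ z : ℤ, α - β ≠ (z : ℝ))
    (i2 : ∀ z : ℤ, 2 * β + 2 * ζ ≠ (z : ℝ))
    (i3 : ∀ z : ℤ, 2 * α + β + 2 * ζ ≠ (z : ℝ))
    (m : ℕ) (hm : m ≤ N)
    (u : ℤ → ℝ)
    (hu : ∀ k : ℤ, 0 ≤ k → k ≤ (N : ℤ) → u k = racahRat α β ζ N m k.toNat)
    (humin : u (-1) = 0)
    (humax : u ((N : ℤ) + 1) = 0) :
    ∀ n : ℕ, n ≤ N → ∀ B D : ℝ,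
      B = ((n : ℝ) - (N : ℝ)) * ((n : ℝ) + (N : ℝ) - 2 * α - β - 2 * ζ)
            * ((n : ℝ) - α + β + 1) →
      D = (n : ℝ) * ((n : ℝ) - 2 * α + β) * ((n : ℝ) - α - β - 2 * ζ - 1) →
      B * u ((n : ℤ) + 1) - (B + D) * u (n : ℤ) + D * u ((n : ℤ) - 1)
        = (m : ℝ) * (2 * β + 2 * ζ + 1 - (m : ℝ))
          * (((n : ℝ) - α) * u (n : ℤ)
            - (n : ℝ) * ((n : ℝ) - 2 * α + β) / ((n : ℝ) - α + β) * u ((n : ℤ) - 1)) := by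
  intro n hnN B D hB hD
  subst hB hD
  have hxabn : ∀ j : ℕ, (j:ℝ) - α + β ≠ 0 := fun j h => i1 j (by push_cast; linarith)
  by_cases hn0 : n = 0
  · subst hn0
    have hu0 : u ((0:ℕ):ℤ) = 1 := by
      rw [hu ((0:ℕ):ℤ) (by norm_num) (by positivity)]
      norm_num [racahRat, poch]
    have hu1r : u (((0:ℕ):ℤ) + 1) = racahRat α β ζ N m 1 := by
      rw [show ((0:ℕ):ℤ) + 1 = ((1:ℕ):ℤ) by norm_num,
        hu ((1:ℕ):ℤ) (by norm_num) (by exact_mod_cast hN), Int.toNat_natCast]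
    rcases Nat.eq_zero_or_pos m with hm0 | hm1
    · subst hm0
      have h1 : racahRat α β ζ N 0 1 = 1 := by norm_num [racahRat, poch]
      rw [hu1r, h1, hu0]
      push_cast
      ring
    · have hmin : min m 1 = 1 := by omega
      have hr1 : racahRat α β ζ N m 1
          = 1 + (-(m:ℝ)) * (-(1:ℝ)) * (-α) * ((m:ℝ) - 2*β - 2*ζ - 1)
            / ((-(N:ℝ)) * (α - β - 1) * ((N:ℝ) - 2*α - β - 2*ζ)) := by
        rw [racahRat, hmin, Finset.sum_range_succ, Finset.sum_range_one]
        norm_num [poch, Nat.factorial]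
      have hN0 : (N:ℝ) ≠ 0 := by positivity
      have hab1' : α - β - 1 ≠ 0 := fun h => i1 1 (by push_cast; linarith)
      have hq3' : (N:ℝ) - 2*α - β - 2*ζ ≠ 0 := fun h => i3 N (by push_cast; linarith)
      have hxab0 : (0:ℝ) - α + β ≠ 0 := by simpa using hxabn 0
      rw [hu1r, hr1, hu0]
      push_cast
      field_simp
      ring
  · have hn1 : 1 ≤ n := Nat.one_le_iff_ne_zero.mpr hn0
    have hxab : (n:ℝ) - α + β ≠ 0 := hxabn n
    have hxne : (n:ℝ) ≠ 0 := Nat.cast_ne_zero.mpr hn0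
    have hS0 : u (n:ℤ) = ∑ k ∈ Finset.range (m+1), Tgen α β ζ N m (n:ℝ) k := by
      rw [hu (n:ℤ) (by positivity) (by exact_mod_cast hnN), Int.toNat_natCast]
      exact racah_ext α β ζ N m n
    have hSm : u ((n:ℤ) - 1) = ∑ k ∈ Finset.range (m+1), Tgen α β ζ N m ((n:ℝ) - 1) k := by
      rw [show (n:ℤ) - 1 = ((n-1:ℕ):ℤ) by omega,
        hu ((n-1:ℕ):ℤ) (by positivity) (by omega), Int.toNat_natCast, racah_ext,
        show ((n-1:ℕ):ℝ) = (n:ℝ) - 1 by rw [Nat.cast_sub hn1]; norm_num]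
    have hSp : ((n:ℝ) - (N:ℝ)) * ((n:ℝ) + (N:ℝ) - 2*α - β - 2*ζ) * ((n:ℝ) - α + β + 1)
          * u ((n:ℤ) + 1)
        = ((n:ℝ) - (N:ℝ)) * ((n:ℝ) + (N:ℝ) - 2*α - β - 2*ζ) * ((n:ℝ) - α + β + 1)
          * ∑ k ∈ Finset.range (m+1), Tgen α β ζ N m ((n:ℝ)+1) k := by
      by_cases hnN' : n = N
      · have hzero : (n:ℝ) - (N:ℝ) = 0 := by rw [hnN']; ring
        have humax' : u ((n:ℤ) + 1) = 0 := by
          rw [show (n:ℤ) = (N:ℤ) from by exact_mod_cast hnN']; exact humax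
        rw [humax', hzero]
        ring
      · have hle : n + 1 ≤ N := by omega
        rw [show (n:ℤ) + 1 = ((n+1:ℕ):ℤ) by push_cast; ring,
          hu ((n+1:ℕ):ℤ) (by positivity) (by exact_mod_cast hle), Int.toNat_natCast,
          racah_ext, show ((n+1:ℕ):ℝ) = (n:ℝ) + 1 by push_cast; ring]
    have hq1big : ∀ k : ℕ, k + 1 ≤ N → poch (-(N:ℝ)) (k+1) ≠ 0 := by
      intro k hk; apply poch_ne_zero; intro i hi
      have h1 : (i:ℝ) < (N:ℝ) := by exact_mod_cast (show i < N by omega)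
      intro h; linarith
    have hq2big : ∀ k : ℕ, poch (α - β - (n:ℝ) - 1) (k+3) ≠ 0 := by
      intro k; apply poch_ne_zero; intro i hi
      intro h; apply i1 ((n:ℤ) + 1 - i); push_cast; linarith
    have hq3big : ∀ k : ℕ, poch ((N:ℝ) - 2*α - β - 2*ζ) (k+1) ≠ 0 := by
      intro k; apply poch_ne_zero; intro i hi
      intro h; apply i3 ((N:ℤ) + i); push_cast; linarith
    have hsum : ∑ k ∈ Finset.range (m+1),
        (((n:ℝ) - N) * ((n:ℝ) + N - 2*α - β - 2*ζ) * ((n:ℝ) - α + β + 1)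
            * Tgen α β ζ N m ((n:ℝ)+1) k
          - (((n:ℝ) - N) * ((n:ℝ) + N - 2*α - β - 2*ζ) * ((n:ℝ) - α + β + 1)
             + (n:ℝ) * ((n:ℝ) - 2*α + β) * ((n:ℝ) - α - β - 2*ζ - 1)
             + (m:ℝ) * (2*β + 2*ζ + 1 - m) * ((n:ℝ) - α)) * Tgen α β ζ N m (n:ℝ) k
          + ((n:ℝ) * ((n:ℝ) - 2*α + β) * ((n:ℝ) - α - β - 2*ζ - 1)
             + (m:ℝ) * (2*β + 2*ζ + 1 - m) * (n:ℝ) * ((n:ℝ) - 2*α + β) / ((n:ℝ) - α + β))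
              * Tgen α β ζ N m ((n:ℝ)-1) k) = 0 := by
      rw [Finset.sum_range_succ']
      rw [Finset.sum_congr rfl (fun k hk => key α β ζ N m (n:ℝ) k hxne
        (hq1big k (by simp only [Finset.mem_range] at hk; omega))
        (hq2big k) (hq3big k) hxab)]
      rw [Finset.sum_range_sub (fun j => Gcert α β ζ N m (n:ℝ) j)]
      rw [key0 α β ζ N m (n:ℝ) (by
        intro h; exact hxab (by linarith)) hxab]
      have hGm : Gcert α β ζ N m (n:ℝ) m = 0 := by
        rw [Gcert, poch_nat_eq_zero (Nat.lt_succ_self m)]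
        simp
      rw [hGm]
      ring
    rw [hS0, hSm]
    have hsplit : ((n:ℝ) - N) * ((n:ℝ) + N - 2*α - β - 2*ζ) * ((n:ℝ) - α + β + 1)
          * (∑ k ∈ Finset.range (m+1), Tgen α β ζ N m ((n:ℝ)+1) k)
        - (((n:ℝ) - N) * ((n:ℝ) + N - 2*α - β - 2*ζ) * ((n:ℝ) - α + β + 1)
           + (n:ℝ) * ((n:ℝ) - 2*α + β) * ((n:ℝ) - α - β - 2*ζ - 1)
           + (m:ℝ) * (2*β + 2*ζ + 1 - m) * ((n:ℝ) - α))
          * (∑ k ∈ Finset.range (m+1), Tgen α β ζ N m (n:ℝ) k)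
        + ((n:ℝ) * ((n:ℝ) - 2*α + β) * ((n:ℝ) - α - β - 2*ζ - 1)
           + (m:ℝ) * (2*β + 2*ζ + 1 - m) * (n:ℝ) * ((n:ℝ) - 2*α + β) / ((n:ℝ) - α + β))
          * (∑ k ∈ Finset.range (m+1), Tgen α β ζ N m ((n:ℝ)-1) k) = 0 := by
      rw [Finset.mul_sum, Finset.mul_sum, Finset.mul_sum, ← Finset.sum_sub_distrib,
        ← Finset.sum_add_distrib]
      exact hsum
    linear_combination hSp + hsplit
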